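/- For positive integers n, r, λ, the vector w with entries w_ℓ = 1/Σ_{j=0}^{⌊r/λ⌋} C(ℓ,j), ℓ = 0,...,n, is a feasible fractional transversal weight for the ALD ball hypergraph, and consequently A_λ(n, 2r+1) ≤ 2^n · Σ_{ℓ=0}^n C(n,ℓ) / Σ_{j=0}^{⌊r/λ⌋} C(ℓ,j). -/

import Mathlib

open Finset

def ind (p : Prop) [Decidable p] : ℤ := if p then 1 else 0

def aldSym (lam : ℕ) (a b c d : Bool) : ℤ :=
  (1 + lam) * (ind (a = b) + ind (c = d))
    + lam * ind (a = !b ∧ !b = !c ∧ !c = d)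
    - 2 * (1 + lam) * ind (a = b ∧ b = c ∧ c = d)

def ALD (lam n : ℕ) (x y : (Fin n → Bool) × (Fin n → Bool)) : ℤ :=
  ∑ i, aldSym lam (x.1 i) (x.2 i) (y.1 i) (y.2 i)

def wt {n : ℕ} (a b : Fin n → Bool) : ℕ :=
  (Finset.univ.filter fun i => a i ≠ b i).card

/-!
The flips of at most `k = ⌊r/λ⌋` Class 1 coordinates of a word `x` stay in the set of words with
the same difference set `D(x) = {i | x.1 i ≠ x.2 i}`, form a set of `∑_{j ≤ k} C(|D(x)|, j)`
words, and all lie within distance `λ k ≤ r` of `x`; two such balls around distinct codewords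
would put them at distance `≤ 2r`, so the balls of the code are disjoint. Giving each word `z`
the weight `1 / ∑_{j ≤ k} C(wt z, j)` makes every ball weigh exactly one, so `|C|` is at most
the total weight; that total is evaluated by noting that each difference set is shared by
exactly `2^n` words.
-/

lemma card_filter_powerset_card_le {α : Type*} (s : Finset α) (k : ℕ) :
    #{T ∈ s.powerset | #T ≤ k} = ∑ j ∈ range (k + 1), (#s).choose j := by
  classical
  have hsplit : {T ∈ s.powerset | #T ≤ k} = (range (k + 1)).biUnion (powersetCard · s) := by
    ext T
    simp [mem_powersetCard, and_comm]
  rw [hsplit, card_biUnion fun i _ j _ hij => s.pairwise_disjoint_powersetCard hij]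
  simp [card_powersetCard]

lemma aldSym_self (lam : ℕ) (a b : Bool) : aldSym lam a b a b = 0 := by
  cases a <;> cases b <;> grind [aldSym, ind]

lemma aldSym_not_not (lam : ℕ) {a b : Bool} (h : a ≠ b) : aldSym lam a b (!a) (!b) = lam := by
  cases a <;> cases b <;> grind [aldSym, ind]

def ballVolume (k l : ℕ) : ℕ := ∑ j ∈ range (k + 1), l.choose j

lemma ballVolume_pos (k l : ℕ) : 0 < ballVolume k l :=
  sum_pos' (fun _ _ => Nat.zero_le _) ⟨0, by simp, by simp⟩

section FlipBall

variable {n : ℕ}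

def diffSet (x : (Fin n → Bool) × (Fin n → Bool)) : Finset (Fin n) :=
  univ.filter fun i => x.1 i ≠ x.2 i

@[simp]
lemma mem_diffSet {x : (Fin n → Bool) × (Fin n → Bool)} {i : Fin n} :
    i ∈ diffSet x ↔ x.1 i ≠ x.2 i := by
  simp [diffSet]

lemma card_diffSet (x : (Fin n → Bool) × (Fin n → Bool)) : #(diffSet x) = wt x.1 x.2 := rfl

/-- On a coordinate of `diffSet x`, flipping both bits is a Class 1 change. -/
def flipAt (T : Finset (Fin n)) (x : (Fin n → Bool) × (Fin n → Bool)) :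
    (Fin n → Bool) × (Fin n → Bool) :=
  (fun i => if i ∈ T then !x.1 i else x.1 i, fun i => if i ∈ T then !x.2 i else x.2 i)

lemma flipAt_flipAt (T T' : Finset (Fin n)) (x : (Fin n → Bool) × (Fin n → Bool)) :
    flipAt T' (flipAt T x) = flipAt (symmDiff T T') x := by
  ext i <;> by_cases hT : i ∈ T <;> by_cases hT' : i ∈ T' <;>
    simp [flipAt, hT, hT', mem_symmDiff]

lemma flipAt_empty (x : (Fin n → Bool) × (Fin n → Bool)) : flipAt ∅ x = x := by
  simp [flipAt]

lemma diffSet_flipAt (T : Finset (Fin n)) (x : (Fin n → Bool) × (Fin n → Bool)) :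
    diffSet (flipAt T x) = diffSet x := by
  ext i
  by_cases hT : i ∈ T <;> simp [flipAt, hT]

lemma flipAt_left_injective (x : (Fin n → Bool) × (Fin n → Bool)) :
    Function.Injective (flipAt · x) := by
  intro T T' h
  ext i
  have hi := congrFun (congrArg Prod.fst h) i
  by_cases hT : i ∈ T <;> by_cases hT' : i ∈ T' <;> simp [flipAt, hT, hT'] at hi ⊢

lemma ALD_flipAt (lam : ℕ) {T : Finset (Fin n)} {x : (Fin n → Bool) × (Fin n → Bool)}
    (hT : T ⊆ diffSet x) : ALD lam n x (flipAt T x) = lam * #T := by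
  have hterm : ∀ i, aldSym lam (x.1 i) (x.2 i) ((flipAt T x).1 i) ((flipAt T x).2 i)
      = if i ∈ T then (lam : ℤ) else 0 := by
    intro i
    by_cases hi : i ∈ T
    · have hne : x.1 i ≠ x.2 i := mem_diffSet.mp (hT hi)
      simp [flipAt, hi, aldSym_not_not lam hne]
    · simp [flipAt, hi, aldSym_self]
  simp only [ALD, hterm, sum_ite_mem, univ_inter, sum_const, nsmul_eq_mul]
  ring

def flipBall (k : ℕ) (x : (Fin n → Bool) × (Fin n → Bool)) :
    Finset ((Fin n → Bool) × (Fin n → Bool)) :=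
  {T ∈ (diffSet x).powerset | #T ≤ k}.image (flipAt · x)

lemma mem_flipBall {k : ℕ} {x z : (Fin n → Bool) × (Fin n → Bool)} :
    z ∈ flipBall k x ↔ ∃ T ⊆ diffSet x, #T ≤ k ∧ flipAt T x = z := by
  simp [flipBall, and_assoc]

lemma card_flipBall (k : ℕ) (x : (Fin n → Bool) × (Fin n → Bool)) :
    #(flipBall k x) = ballVolume k (wt x.1 x.2) := by
  rw [flipBall, card_image_of_injective _ (flipAt_left_injective x),
    card_filter_powerset_card_le, card_diffSet, ballVolume]

lemma wt_of_mem_flipBall {k : ℕ} {x z : (Fin n → Bool) × (Fin n → Bool)}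
    (hz : z ∈ flipBall k x) : wt z.1 z.2 = wt x.1 x.2 := by
  obtain ⟨T, -, -, rfl⟩ := mem_flipBall.mp hz
  rw [← card_diffSet, ← card_diffSet, diffSet_flipAt]

lemma ALD_le_of_mem_flipBall (lam k : ℕ) {x y z : (Fin n → Bool) × (Fin n → Bool)}
    (hx : z ∈ flipBall k x) (hy : z ∈ flipBall k y) : ALD lam n x y ≤ 2 * (lam * k) := by
  obtain ⟨T, hTx, hTk, rfl⟩ := mem_flipBall.mp hx
  obtain ⟨T', hT'y, hT'k, hT'⟩ := mem_flipBall.mp hy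
  have hy_eq : y = flipAt (symmDiff T T') x := by
    rw [← flipAt_flipAt, ← hT', flipAt_flipAt, symmDiff_self, bot_eq_empty, flipAt_empty]
  have hT'x : T' ⊆ diffSet x := by
    rwa [← diffSet_flipAt T x, ← hT', diffSet_flipAt]
  have hsub : symmDiff T T' ⊆ T ∪ T' := symmDiff_le_sup
  have hcard : #(symmDiff T T') ≤ 2 * k :=
    ((card_le_card hsub).trans (card_union_le T T')).trans (by omega)
  rw [hy_eq, ALD_flipAt lam (hsub.trans (union_subset hTx hT'x))]
  exact_mod_cast (Nat.mul_le_mul_left lam hcard).trans_eq (by ring)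

lemma pairwiseDisjoint_flipBall {lam k : ℕ} {C : Finset ((Fin n → Bool) × (Fin n → Bool))}
    (hC : ∀ x ∈ C, ∀ y ∈ C, x ≠ y → 2 * (lam * k : ℤ) < ALD lam n x y) :
    (C : Set ((Fin n → Bool) × (Fin n → Bool))).PairwiseDisjoint (flipBall k) := by
  intro x hx y hy hxy
  rw [Function.onFun, disjoint_left]
  intro z hzx hzy
  exact (hC x hx y hy hxy).not_ge (ALD_le_of_mem_flipBall lam k hzx hzy)

def transversalWeight (k : ℕ) (z : (Fin n → Bool) × (Fin n → Bool)) : ℚ :=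
  (ballVolume k (wt z.1 z.2) : ℚ)⁻¹

lemma sum_transversalWeight_flipBall (k : ℕ) (x : (Fin n → Bool) × (Fin n → Bool)) :
    ∑ z ∈ flipBall k x, transversalWeight k z = 1 := by
  rw [sum_congr rfl fun z hz => by rw [transversalWeight, wt_of_mem_flipBall hz], sum_const,
    card_flipBall, nsmul_eq_mul]
  exact mul_inv_cancel₀ (by exact_mod_cast (ballVolume_pos _ _).ne')

def diffSetEquiv : ((Fin n → Bool) × (Fin n → Bool)) ≃ (Fin n → Bool) × Finset (Fin n) where
  toFun z := (z.1, diffSet z)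
  invFun p := (p.1, fun i => if i ∈ p.2 then !p.1 i else p.1 i)
  left_inv z := by
    ext i
    · rfl
    · simp only [mem_diffSet]
      cases z.1 i <;> cases z.2 i <;> rfl
  right_inv p := by
    ext i
    · rfl
    · by_cases h : i ∈ p.2 <;> simp [h]

lemma sum_comp_diffSet {M : Type*} [AddCommMonoid M] (g : Finset (Fin n) → M) :
    ∑ z, g (diffSet z) = 2 ^ n • ∑ D, g D := by
  calc ∑ z, g (diffSet z) = ∑ p : (Fin n → Bool) × Finset (Fin n), g p.2 :=
        Fintype.sum_equiv diffSetEquiv _ _ fun z => rfl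
    _ = 2 ^ n • ∑ D, g D := by simp [Fintype.sum_prod_type]

end FlipBall

lemma sum_transversalWeight_univ (k n : ℕ) :
    ∑ z : (Fin n → Bool) × (Fin n → Bool), transversalWeight k z
      = 2 ^ n * ∑ l ∈ range (n + 1), (n.choose l : ℚ) / ballVolume k l := by
  simp only [transversalWeight, ← card_diffSet]
  rw [sum_comp_diffSet (fun D => (ballVolume k #D : ℚ)⁻¹), ← powerset_univ,
    sum_powerset_apply_card (fun m => (ballVolume k m : ℚ)⁻¹), card_univ, Fintype.card_fin,
    nsmul_eq_mul]
  simp [div_eq_mul_inv]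

theorem ald_sphere_packing_bound_general (lam n r : ℕ)
    (C : Finset ((Fin n → Bool) × (Fin n → Bool)))
    (hC : ∀ x ∈ C, ∀ y ∈ C, x ≠ y → (2 * r + 1 : ℤ) ≤ ALD lam n x y) :
    (C.card : ℚ) ≤ 2 ^ n * ∑ l ∈ Finset.range (n + 1),
      (n.choose l : ℚ) / (∑ j ∈ Finset.range (r / lam + 1), (l.choose j : ℚ)) := by
  set k := r / lam
  have hdisj := pairwiseDisjoint_flipBall (lam := lam) (k := k) (C := C) fun x hx y hy hxy => by
    have hk : lam * k ≤ r := Nat.mul_div_le r lam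
    have := hC x hx y hy hxy
    omega
  calc (C.card : ℚ)
      = ∑ x ∈ C, ∑ z ∈ flipBall k x, transversalWeight k z := by
        simp [sum_transversalWeight_flipBall]
    _ = ∑ z ∈ C.biUnion (flipBall k), transversalWeight k z := (sum_biUnion hdisj).symm
    _ ≤ ∑ z, transversalWeight k z :=
        sum_le_univ_sum_of_nonneg fun z => inv_nonneg.mpr (Nat.cast_nonneg _)
    _ = _ := by simp [sum_transversalWeight_univ, ballVolume]

theorem ald_sphere_packing_bound (lam n r : ℕ) (hlam : 0 < lam) (hn : 0 < n) (hr : 0 < r)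
    (C : Finset ((Fin n → Bool) × (Fin n → Bool)))
    (hC : ∀ x ∈ C, ∀ y ∈ C, x ≠ y → (2 * r + 1 : ℤ) ≤ ALD lam n x y) :
    (C.card : ℚ) ≤ 2 ^ n * ∑ l ∈ Finset.range (n + 1),
      (n.choose l : ℚ) / (∑ j ∈ Finset.range (r / lam + 1), (l.choose j : ℚ)) :=
  ald_sphere_packing_bound_general lam n r C hC
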